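/- If Φ is positive definite on the subspace {v : Pᵀ v = 0} (conditional positive definiteness) and P has full column rank, then the saddle-point matrix [[Φ, P],[Pᵀ, 0]] is invertible. -/

import Mathlib

/-! If `Φ v + P c = 0` and `Pᵀ v = 0`, then `vᵀ Φ v = -vᵀ P c = -(Pᵀ v)ᵀ c = 0`, so `v = 0` by
conditional positive definiteness; then `P c = 0`, and `c = 0` because `P` is injective. -/

open Matrix

namespace Matrix

variable {m n R : Type*} [Fintype m] [Fintype n] [CommRing R] [PartialOrder R]
  {A : Matrix m m R} {B : Matrix m n R}

theorem eq_zero_and_eq_zero_of_saddle_point_eqns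
    (hA : ∀ v : m → R, v ≠ 0 → Bᵀ *ᵥ v = 0 → 0 < v ⬝ᵥ (A *ᵥ v))
    (hB : Function.Injective (B *ᵥ ·)) {v : m → R} {c : n → R}
    (h₁ : A *ᵥ v + B *ᵥ c = 0) (h₂ : Bᵀ *ᵥ v = 0) : v = 0 ∧ c = 0 := by
  have hv : v = 0 := by
    by_contra hv
    have hquad : v ⬝ᵥ (A *ᵥ v) = 0 :=
      calc v ⬝ᵥ (A *ᵥ v) = v ⬝ᵥ (A *ᵥ v + B *ᵥ c) := by
            rw [dotProduct_add, dotProduct_mulVec v B, ← mulVec_transpose, h₂, zero_dotProduct,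
              add_zero]
        _ = 0 := by rw [h₁, dotProduct_zero]
    exact (hA v hv h₂).ne' hquad
  subst hv
  exact ⟨rfl, hB (by simpa using h₁)⟩

theorem eq_zero_of_fromBlocks_zero₂₂_mulVec_eq_zero
    (hA : ∀ v : m → R, v ≠ 0 → Bᵀ *ᵥ v = 0 → 0 < v ⬝ᵥ (A *ᵥ v))
    (hB : Function.Injective (B *ᵥ ·)) {x : m ⊕ n → R}
    (hx : fromBlocks A B Bᵀ 0 *ᵥ x = 0) : x = 0 := by
  rw [fromBlocks_mulVec, zero_mulVec, add_zero, ← Sum.elim_zero_zero, Sum.elim_eq_iff] at hx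
  obtain ⟨hv, hc⟩ := eq_zero_and_eq_zero_of_saddle_point_eqns hA hB hx.1 hx.2
  rw [← Sum.elim_comp_inl_inr x, hv, hc, Sum.elim_zero_zero]

theorem isUnit_fromBlocks_zero₂₂ {K : Type*} [Field K] [PartialOrder K] [DecidableEq m]
    [DecidableEq n] {A : Matrix m m K} {B : Matrix m n K}
    (hA : ∀ v : m → K, v ≠ 0 → Bᵀ *ᵥ v = 0 → 0 < v ⬝ᵥ (A *ᵥ v))
    (hB : Function.Injective (B *ᵥ ·)) : IsUnit (fromBlocks A B Bᵀ 0) := by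
  rw [← mulVec_injective_iff_isUnit, ← coe_mulVecLin, injective_iff_map_eq_zero]
  exact fun x hx ↦ eq_zero_of_fromBlocks_zero₂₂_mulVec_eq_zero hA hB hx

end Matrix

theorem saddle_invertible_conditional_posdef_general (n s : ℕ)
    (Φ : Matrix (Fin n) (Fin n) ℝ) (P : Matrix (Fin n) (Fin s) ℝ)
    (hΦ : ∀ v : Fin n → ℝ, v ≠ 0 → Pᵀ *ᵥ v = 0 → 0 < v ⬝ᵥ (Φ *ᵥ v))
    (hP : Function.Injective fun c : Fin s → ℝ => P *ᵥ c) :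
    IsUnit (Matrix.fromBlocks Φ P Pᵀ (0 : Matrix (Fin s) (Fin s) ℝ)) :=
  isUnit_fromBlocks_zero₂₂ hΦ hP

theorem saddle_invertible_conditional_posdef (n s : ℕ)
    (Φ : Matrix (Fin n) (Fin n) ℝ) (P : Matrix (Fin n) (Fin s) ℝ)
    (hSymm : Φ.IsSymm)
    (hΦ : ∀ v : Fin n → ℝ, v ≠ 0 → Pᵀ *ᵥ v = 0 → 0 < v ⬝ᵥ (Φ *ᵥ v))
    (hP : Function.Injective fun c : Fin s → ℝ => P *ᵥ c) :
    IsUnit (Matrix.fromBlocks Φ P Pᵀ (0 : Matrix (Fin s) (Fin s) ℝ)) :=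
  saddle_invertible_conditional_posdef_general n s Φ P hΦ hP
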